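/- arXiv:2504.05582 — 4 statements merged into one kernel-verified Lean document; each statement's English description precedes it below -/
import Mathlib

section
/- Let τ = (τ_n : A_{n+1}* → A_n*)_{n≥0} be a constant-length directive sequence with |A_{n+1}| = 2 for every n ≥ 0, and suppose X_τ is aperiodic. For n ≥ 0 let p_n = |τ_{[0,n+1)}(a)| (which is independent of a ∈ A_{n+1}). Then for every x ∈ X_τ and every n ≥ 0 there exists an integer t with 0 ≤ t < p_n such that (p_n, t) is a strong rank-2 cut of x and { x[t+k p_n, t+(k+1) p_n) : k ∈ ℤ } = { τ_{[0,n+1)}(a) : a ∈ A_{n+1} }. -/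
namespace ToeplitzFR

open Set

variable {A B C : Type*}

/-- The shift map `S` on `ℤ → A`: `S(x)(i) = x(i+1)`. -/
def shift (x : ℤ → A) : ℤ → A := fun i => x (i + 1)

/-- The inverse shift map `S⁻¹`. -/
def shiftInv (x : ℤ → A) : ℤ → A := fun i => x (i - 1)

/-- The shift by `k`: `S^k`. -/
def shiftBy (k : ℤ) (x : ℤ → A) : ℤ → A := fun i => x (i + k)

/-- The finite word `x[i, i+n)`. -/
def factorAt (x : ℤ → A) (i : ℤ) (n : ℕ) : List A :=
  (List.range n).map fun j => x (i + j)

/-- `x` is a periodic point of the shift. -/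
def IsPeriodicPoint (x : ℤ → A) : Prop := ∃ p : ℕ, 0 < p ∧ ∀ i : ℤ, x (i + p) = x i

def IsAperiodicPoint (x : ℤ → A) : Prop := ¬ IsPeriodicPoint x

/-- `Per_p(x)`. -/
def PerSet (x : ℤ → A) (p : ℕ) : Set ℤ := {i : ℤ | ∀ k : ℤ, x (i + k * p) = x i}

/-- `Per(x) = ⋃_{p>1} Per_p(x)`. -/
def PerAll (x : ℤ → A) : Set ℤ := {i : ℤ | ∃ p : ℕ, 1 < p ∧ i ∈ PerSet x p}

/-- `x` is a Toeplitz sequence. -/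
def IsToeplitz (x : ℤ → A) : Prop := ∀ i : ℤ, ∃ p : ℕ, 1 < p ∧ i ∈ PerSet x p

/-- The shift orbit of `x`. -/
def orbit (x : ℤ → A) : Set (ℤ → A) := {y | ∃ k : ℤ, y = shiftBy k x}

/-- `X` is the Toeplitz subshift generated by the Toeplitz sequence `x`. -/
def ToeplitzGenerates [TopologicalSpace A] (x : ℤ → A) (X : Set (ℤ → A)) : Prop :=
  IsToeplitz x ∧ X = closure (orbit x)

/-- `X` is a Toeplitz subshift. -/
def IsToeplitzSubshift [TopologicalSpace A] (X : Set (ℤ → A)) : Prop :=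
  ∃ x : ℤ → A, ToeplitzGenerates x X

/-- The `p`-skeleton of `x`, with `none` as the blank symbol. -/
noncomputable def Skel (x : ℤ → A) (p : ℕ) : ℤ → Option A :=
  fun i => @ite _ (i ∈ PerSet x p) (Classical.dec _) (some (x i)) none

/-- `p` is an essential period of `x`. -/
def IsEssentialPeriod (x : ℤ → A) (p : ℕ) : Prop :=
  1 < p ∧ ∀ q : ℕ, 0 < q → q < p → ∃ i : ℤ, Skel x p (i + q) ≠ Skel x p i

/-- `(P n)` is a period structure for `x`. -/
def IsPeriodStructure (x : ℤ → A) (P : ℕ → ℕ) : Prop :=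
  StrictMono P ∧ (∀ n, IsEssentialPeriod x (P n)) ∧ (∀ n, P n ∣ P (n+1)) ∧
    ∀ i : ℤ, ∃ n, i ∈ PerSet x (P n)

/-- `q` divides the scale of the Toeplitz subshift `X`. -/
def DividesScale [TopologicalSpace A] (X : Set (ℤ → A)) (q : ℕ) : Prop :=
  ∃ (x : ℤ → A) (P : ℕ → ℕ),
    ToeplitzGenerates x X ∧ IsPeriodStructure x P ∧ ∃ n, q ∣ P n

/-! ### Directive sequences and S-adic subshifts -/

/-- All morphisms in the directive sequence are non-erasing. -/
def NonErasing {A : ℕ → Type*} (τ : ∀ n, A (n+1) → List (A n)) : Prop :=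
  ∀ n a, τ n a ≠ []

/-- The directive sequence has constant length. -/
def ConstantLength {A : ℕ → Type*} (τ : ∀ n, A (n+1) → List (A n)) : Prop :=
  ∀ n, ∀ a b : A (n+1), (τ n a).length = (τ n b).length

/-- The directive sequence is proper. -/
def ProperSeq {A : ℕ → Type*} (τ : ∀ n, A (n+1) → List (A n)) : Prop :=
  ∀ n, ∃ b c : A n, ∀ a : A (n+1), (τ n a).head? = some b ∧ (τ n a).getLast? = some c

/-- `sadicWordAux τ n k a = τ_{[n, n+k)}(a)`. -/
def sadicWordAux {A : ℕ → Type*} (τ : ∀ n, A (n+1) → List (A n)) (n : ℕ) :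
    ∀ k : ℕ, A (n + k) → List (A n)
  | 0, a => [a]
  | (k+1), a => (τ (n+k) a).flatMap (sadicWordAux τ n k)

/-- `word0 τ k a = τ_{[0, k)}(a)` for `a ∈ A k`. -/
def word0 {A : ℕ → Type*} (τ : ∀ n, A (n+1) → List (A n)) :
    ∀ k : ℕ, A k → List (A 0)
  | 0, a => [a]
  | (k+1), a => (τ k a).flatMap (word0 τ k)

/-- The directive sequence is primitive. -/
def PrimitiveSeq {A : ℕ → Type*} (τ : ∀ n, A (n+1) → List (A n)) : Prop :=
  ∀ n, ∃ k : ℕ, 0 < k ∧ ∀ (a : A (n+k)) (b : A n), b ∈ sadicWordAux τ n k a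

/-- The `n`-th level `X_τ^{(n)}` of the S-adic system generated by `τ`. -/
def XLevel {A : ℕ → Type*} (τ : ∀ n, A (n+1) → List (A n)) (n : ℕ) :
    Set (ℤ → A n) :=
  {y | ∀ (i : ℤ) (m : ℕ), ∃ k : ℕ, 0 < k ∧ ∃ a : A (n+k),
      (factorAt y i m).IsInfix (sadicWordAux τ n k a)}

/-- The alphabet rank (`liminf_n |A_n|`) is at most `K`. -/
def AlphabetRankLE (A : ℕ → Type*) [∀ n, Fintype (A n)] (K : ℕ) : Prop :=
  ∀ N : ℕ, ∃ n, N ≤ n ∧ Fintype.card (A n) ≤ K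

/-! ### Recognizability -/

/-- `z` is the bi-infinite concatenation `⋯σ(y(-1)).σ(y(0))σ(y(1))⋯`,
with `σ(y(0))` starting at coordinate `0`. -/
def IsConcat (σ : B → List C) (y : ℤ → B) (z : ℤ → C) : Prop :=
  ∃ c : ℤ → ℤ, c 0 = 0 ∧ (∀ j : ℤ, c (j + 1) = c j + (σ (y j)).length) ∧
    ∀ (j : ℤ) (m : Fin (σ (y j)).length), z (c j + (m : ℕ)) = (σ (y j)).get m

/-- `(y, k)` is a centered `σ`-representation of `x` in `Y`. -/
def IsCenteredRep (σ : B → List C) (Y : Set (ℤ → B)) (x : ℤ → C)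
    (y : ℤ → B) (k : ℕ) : Prop :=
  y ∈ Y ∧ k < (σ (y 0)).length ∧ IsConcat σ y (fun m => x (m - k))

/-- The morphism `σ` is recognizable in `Y`. -/
def RecognizableIn (σ : B → List C) (Y : Set (ℤ → B)) : Prop :=
  ∀ (x : ℤ → C) (y y' : ℤ → B) (k k' : ℕ),
    IsCenteredRep σ Y x y k → IsCenteredRep σ Y x y' k' → y = y' ∧ k = k'

/-- The directive sequence `τ` is recognizable. -/
def RecognizableSeq {A : ℕ → Type*} (τ : ∀ n, A (n+1) → List (A n)) : Prop :=
  ∀ n, RecognizableIn (τ n) (XLevel τ (n+1))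

/-! ### Conjugacy -/

/-- `(X, TX)` and `(Y, TY)` are conjugate via a homeomorphism. -/
def ConjugateBy [TopologicalSpace A] [TopologicalSpace B]
    (X : Set (ℤ → A)) (Y : Set (ℤ → B))
    (TX : (ℤ → A) → (ℤ → A)) (TY : (ℤ → B) → (ℤ → B)) : Prop :=
  ∃ φ : ↥X ≃ₜ ↥Y, ∀ (x : ℤ → A) (hx : x ∈ X) (hx' : TX x ∈ X),
    (φ ⟨TX x, hx'⟩).1 = TY (φ ⟨x, hx⟩).1

/-- `(X, S)` and `(Y, S)` are conjugate subshifts. -/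
def Conjugate [TopologicalSpace A] [TopologicalSpace B]
    (X : Set (ℤ → A)) (Y : Set (ℤ → B)) : Prop :=
  ConjugateBy X Y shift shift

/-- `X` is a strong Toeplitz subshift of rank `K`: it is conjugate to the S-adic subshift
of a constant-length, primitive, proper and recognizable directive sequence of
alphabet rank at most `K`. -/
def IsStrongToeplitzOfRank [TopologicalSpace A] (X : Set (ℤ → A)) (K : ℕ) : Prop :=
  ∃ (B : ℕ → Type) (iB : ∀ n, Fintype (B n)) (σ : ∀ n, B (n+1) → List (B n)),
    NonErasing σ ∧ ConstantLength σ ∧ PrimitiveSeq σ ∧ ProperSeq σ ∧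
    RecognizableSeq σ ∧ @AlphabetRankLE B iB K ∧
    @Conjugate A (B 0) _ ⊥ X (XLevel σ 0)

/-- `X` is conjugate to the S-adic subshift of a primitive, proper and recognizable
directive sequence of alphabet rank at most `K`. -/
def HasFiniteRankSAdicRep [TopologicalSpace A] (X : Set (ℤ → A)) (K : ℕ) : Prop :=
  ∃ (B : ℕ → Type) (iB : ∀ n, Fintype (B n)) (σ : ∀ n, B (n+1) → List (B n)),
    NonErasing σ ∧ PrimitiveSeq σ ∧ ProperSeq σ ∧
    RecognizableSeq σ ∧ @AlphabetRankLE B iB K ∧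
    @Conjugate A (B 0) _ ⊥ X (XLevel σ 0)

/-! ### Cuts, languages, built-from -/

/-- The set of words `{x[t+kp, t+(k+1)p) : k ∈ ℤ}`. -/
def cutWords (x : ℤ → A) (p t : ℕ) : Set (List A) :=
  {w | ∃ k : ℤ, w = factorAt x ((t : ℤ) + k * p) p}

/-- `(p, t)` is a strong rank-2 cut of `x`. -/
def StrongRank2Cut (x : ℤ → A) (p t : ℕ) : Prop :=
  t < p ∧ ∃ u v : List A, u ≠ v ∧ cutWords x p t = {u, v}

/-- The language `L_n(X)`. -/
def Lang (n : ℕ) (X : Set (ℤ → A)) : Set (List A) :=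
  {w | ∃ x ∈ X, ∃ i : ℤ, w = factorAt x i n}

/-- The maximal common prefix of `u` and `v` has length greater than `m`. -/
def CommonPrefixLongerThan (u v : List A) (m : ℕ) : Prop :=
  m + 1 ≤ u.length ∧ m + 1 ≤ v.length ∧ u.take (m+1) = v.take (m+1)

/-- The maximal common suffix of `u` and `v` has length greater than `m`. -/
def CommonSuffixLongerThan (u v : List A) (m : ℕ) : Prop :=
  CommonPrefixLongerThan u.reverse v.reverse m

/-- `b = (β₀, (α₁, …, α_k), β₁)` is a building of the word `w` from `W`:
`w = β₀α₁⋯α_kβ₁`, all `αᵢ ∈ W`, `β₀` is a proper suffix of an element of `W`,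
and `β₁` is a proper prefix of an element of `W`. -/
def IsBuilding (W : Set (List A)) (w : List A)
    (b : List A × List (List A) × List A) : Prop :=
  w = b.1 ++ b.2.1.flatten ++ b.2.2 ∧ (∀ α ∈ b.2.1, α ∈ W) ∧
  (∃ u ∈ W, b.1 <:+ u ∧ b.1 ≠ u) ∧ (∃ u ∈ W, b.2.2 <+: u ∧ b.2.2 ≠ u)

/-- `w` is uniquely built from `W`. -/
def UniquelyBuiltFrom (W : Set (List A)) (w : List A) : Prop :=
  ∃! b : List A × List (List A) × List A, IsBuilding W w b

/-- `X` together with one of its points satisfies the strong rank-2 cut property. -/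
def GoodCuts [TopologicalSpace A] (X : Set (ℤ → A)) (x : ℤ → A) : Prop :=
  ∀ p : ℕ, 0 < p → DividesScale X p → ∀ m : ℕ,
    ∃ q t : ℕ, StrongRank2Cut x q t ∧ p ∣ q ∧ DividesScale X q ∧
      ∃ u v : List A, u ≠ v ∧ cutWords x q t = {u, v} ∧
        CommonPrefixLongerThan u v m ∧ CommonSuffixLongerThan u v m

/-! ### Euclidean pairs and buildings of bi-infinite sequences -/

/-- `{u, v}` is a Euclidean pair. -/
def EuclideanPair (u v : List A) : Prop :=
  ∃ (w : List A) (k l : ℕ),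
    u = (List.replicate k w).flatten ∧ v = (List.replicate l w).flatten

/-- `α` is the distinguished prefix of `u` and `v`. -/
def IsDistinguishedPrefix (u v α : List A) : Prop :=
  α.length < u.length + v.length ∧
  ∀ x y : List A,
    (∃ l : List (List A), (∀ w ∈ l, w = u ∨ w = v) ∧ x = u ++ l.flatten) →
    (∃ l : List (List A), (∀ w ∈ l, w = u ∨ w = v) ∧ y = v ++ l.flatten) →
    α.length + 1 ≤ x.length → α.length + 1 ≤ y.length →
    α <+: x ∧ α <+: y ∧ x[α.length]? ≠ y[α.length]?

/-- `β` is the distinguished suffix of `u` and `v`. -/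
def IsDistinguishedSuffix (u v β : List A) : Prop :=
  IsDistinguishedPrefix u.reverse v.reverse β.reverse

/-- `(c, f)` is a building of the bi-infinite sequence `x` from `W`:
block `j` starts at position `c j` and carries the word `f j ∈ W`. -/
def IsBuildingSeq (W : Set (List A)) (x : ℤ → A) (c : ℤ → ℤ) (f : ℤ → List A) : Prop :=
  (∀ j : ℤ, f j ∈ W) ∧ (∀ j : ℤ, c (j + 1) = c j + (f j).length) ∧
  ∀ (j : ℤ) (m : Fin (f j).length), x (c j + (m : ℕ)) = (f j).get m

/-- The subshift `X_{u,v}` of all sequences built from `{u, v}`. -/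
def Xuv (u v : List A) : Set (ℤ → A) :=
  {x | ∃ (c : ℤ → ℤ) (f : ℤ → List A), IsBuildingSeq {u, v} x c f}

/-! ### Block-code conjugacies -/

/-- A conjugacy `φ : X → Y` admitting block width `2n+1`. -/
structure BlockConjugacy (A : Type*) (X Y : Set (ℤ → A)) (n : ℕ) where
  toFun : (ℤ → A) → (ℤ → A)
  invFun : (ℤ → A) → (ℤ → A)
  maps_to : ∀ x ∈ X, toFun x ∈ Y
  maps_from : ∀ y ∈ Y, invFun y ∈ X
  left_inv : ∀ x ∈ X, invFun (toFun x) = x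
  right_inv : ∀ y ∈ Y, toFun (invFun y) = y
  shift_comm : ∀ x ∈ X, toFun (shift x) = shift (toFun x)
  code : List A → A
  code_inv : List A → A
  code_spec : ∀ x ∈ X, ∀ i : ℤ, toFun x i = code (factorAt x (i - n) (2*n+1))
  code_inv_spec : ∀ y ∈ Y, ∀ i : ℤ, invFun y i = code_inv (factorAt y (i - n) (2*n+1))

/-! ### Parts, permutation action, χ -/

/-- `W` is a member of `Parts(X, p)`: a class of the common-`p`-skeleton relation. -/
def SkelClass (X : Set (ℤ → A)) (p : ℕ) (W : Set (ℤ → A)) : Prop :=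
  ∃ y ∈ X, W = {z ∈ X | Skel z p = Skel y p}

/-- The map `ψ̂` induced by a permutation `ψ` of `A^p`. -/
def permHat (p : ℕ) (ψ : Equiv.Perm (Fin p → A)) (x : ℤ → A) : ℤ → A :=
  fun i =>
    if h : (i.emod p).toNat < p then
      ψ (fun m : Fin p => x (i - i.emod p + (m : ℕ))) ⟨(i.emod p).toNat, h⟩
    else x i

/-- The relation `E_p` on compact subsets of `A^ℤ`. -/
def EpRel (p : ℕ) (K L : Set (ℤ → A)) : Prop :=
  ∃ ψ : Equiv.Perm (Fin p → A), L = permHat p ψ '' K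

/-- `W ∈ Parts_*(X, p)`. -/
def SkelClassStar (X : Set (ℤ → A)) (p : ℕ) (W : Set (ℤ → A)) : Prop :=
  SkelClass X p W ∧ ∀ y ∈ W, Skel y p (-1) = none ∧ Skel y p 0 ≠ none

/-- `length(W) = L` for `W ∈ Parts_*(X, p)`. -/
def HasLength (p : ℕ) (W : Set (ℤ → A)) (L : ℕ) : Prop :=
  ∀ y ∈ W, (∀ i : ℕ, i < L → Skel y p (i : ℤ) ≠ none) ∧ Skel y p (L : ℤ) = none

/-- `Z ∈ χ(X, p)`. -/
def ChiMem (X : Set (ℤ → A)) (p : ℕ) (Z : Set (ℤ → A)) : Prop :=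
  ∃ (W : Set (ℤ → A)) (L : ℕ), SkelClassStar X p W ∧ HasLength p W L ∧
    (∀ (W' : Set (ℤ → A)) (L' : ℕ),
      SkelClassStar X p W' → HasLength p W' L' → L' ≤ L) ∧
    Z = shiftBy ((L / 2 : ℕ) : ℤ) '' W

/-- `χ(X, p) E_p^fin χ(Y, p)`. -/
def ChiEpFin (X Y : Set (ℤ → A)) (p : ℕ) : Prop :=
  (∀ K, ChiMem X p K → ∃ L, ChiMem Y p L ∧ EpRel p K L) ∧
  (∀ L, ChiMem Y p L → ∃ K, ChiMem X p K ∧ EpRel p K L)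

/-! ### Single holes and fillings -/

/-- The Toeplitz sequence `x` has single holes with respect to the period structure `P`. -/
def SingleHoles (x : ℤ → A) (P : ℕ → ℕ) : Prop :=
  IsPeriodStructure x P ∧
  ∀ n, ∃! i : ℤ, 0 ≤ i ∧ i < (P n : ℤ) ∧ i ∉ PerSet x (P n)

/-- The Toeplitz subshift `X` has single holes. -/
def HasSingleHoles [TopologicalSpace A] (X : Set (ℤ → A)) : Prop :=
  ∃ (x : ℤ → A) (P : ℕ → ℕ), ToeplitzGenerates x X ∧ SingleHoles x P

/-- `w` is the `(n, m)`-filling of `x` (for periods `pn < pm`). -/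
def IsFilling (x : ℤ → A) (pn pm : ℕ) (w : List A) : Prop :=
  w.length = pm / pn - 1 ∧
  ∀ h : ℤ, 0 ≤ h → h < (pm : ℤ) → h ∉ PerSet x pm →
    ∀ (j : ℕ) (hj : j < w.length), w.get ⟨j, hj⟩ = x (h + (j+1) * pn)

/-- `u` is a `θ`-palindrome. -/
def ThetaPalindrome (θ : Equiv.Perm A) (u : List A) : Prop :=
  u.map (fun a => θ a) = u.reverse

/-! ### Nice symmetries -/

/-- `x` has nice symmetries with respect to `(p, q)`. -/
def NiceSymmetries (x : ℤ → A) (p q : ℕ) : Prop :=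
  ∃ m : ℤ, 1 < m ∧ m ≤ (q : ℤ) + 1 ∧
    (∀ k : ℕ, k < q / p →
      (Set.Ico ((k * p : ℕ) : ℤ) (((k+1) * p : ℕ) : ℤ) ⊆ PerSet x q ↔
       Set.Ico (m - ((k+1) * p : ℕ)) (m - (k * p : ℕ)) ⊆ PerSet x q)) ∧
    (∀ k k' : ℕ, k < q / p → k' < q / p →
      Set.Ico ((k * p : ℕ) : ℤ) (((k+1) * p : ℕ) : ℤ) ⊆ PerSet x q →
      Set.Ico ((k' * p : ℕ) : ℤ) (((k'+1) * p : ℕ) : ℤ) ⊆ PerSet x q →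
      (factorAt x ((k * p : ℕ) : ℤ) p = factorAt x ((k' * p : ℕ) : ℤ) p ↔
       factorAt x (m - ((k+1) * p : ℕ)) p = factorAt x (m - ((k'+1) * p : ℕ)) p))

/-- For some `p` dividing the scale of `X`, `x` has nice symmetries with respect to
`(p, q)` for all `q > p` with `p ∣ q` dividing the scale of `X`. -/
def NiceSymAll [TopologicalSpace A] (X : Set (ℤ → A)) (x : ℤ → A) : Prop :=
  ∃ p : ℕ, 0 < p ∧ DividesScale X p ∧
    ∀ q : ℕ, p < q → p ∣ q → DividesScale X q → NiceSymmetries x p q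

/-- A pair `(x, x')` is a centered left asymptotic pair. -/
def CenteredLeftAsymptoticPair (x x' : ℤ → A) : Prop :=
  (∀ i : ℤ, i < 0 → x i = x' i) ∧ x 0 ≠ x' 0

/-! ### Automorphism groups -/

/-- `e` is an automorphism of the subshift `(X, S)`. -/
def IsShiftAutomorphism [TopologicalSpace A] (X : Set (ℤ → A)) (e : ↥X ≃ₜ ↥X) : Prop :=
  ∀ (x : ℤ → A) (hx : x ∈ X) (hx' : shift x ∈ X),
    (e ⟨shift x, hx'⟩).1 = shift (e ⟨x, hx⟩).1

/-- The automorphism group of `(X, S)` is isomorphic, as a group, to `ℤ × ℤ/nℤ`. -/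
def AutGroupIsoZxZmod [TopologicalSpace A] (X : Set (ℤ → A)) (n : ℕ) : Prop :=
  ∃ Φ : {e : ↥X ≃ₜ ↥X // IsShiftAutomorphism X e} → ℤ × ZMod n,
    Function.Bijective Φ ∧
    ∀ e f g : {e : ↥X ≃ₜ ↥X // IsShiftAutomorphism X e},
      (∀ z : ↥X, g.1 z = e.1 (f.1 z)) → Φ g = Φ e + Φ f

/-! ### The Polish space of subshifts over `ℤ` -/

/-- A point of the space `𝐒` of all (compact, nonempty, shift-invariant) subshifts
over finite alphabets contained in `ℤ`. -/
structure SubshiftSpace : Type where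
  carrier : Set (ℤ → ℤ)
  nonempty : carrier.Nonempty
  compact : IsCompact carrier
  invariant : shift '' carrier = carrier

/-- The topology on `𝐒` induced by the languages `(L_n(X))_{n}`, with each
family of `n`-languages discrete; this coincides with the metric
`d(X,Y) = 2^{-min{n : L_n(X) ≠ L_n(Y)}}`. -/
instance : TopologicalSpace SubshiftSpace :=
  TopologicalSpace.induced
    (fun X : SubshiftSpace => (fun n => Lang n X.carrier : ℕ → Set (List ℤ)))
    (@Pi.topologicalSpace ℕ (fun _ => Set (List ℤ)) (fun _ => ⊥))

/-- The subset `𝐌 ⊆ 𝐒` of infinite minimal subshifts. -/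
def MinimalSet : Set SubshiftSpace :=
  {X | X.carrier.Infinite ∧ ∀ x ∈ X.carrier, X.carrier ⊆ closure (orbit x)}

/-!
Cutting `x ∈ X_τ` into blocks of length `p = |τ_{[0,n+1)}(a)|`: every window of `x` is a factor of
some `τ_{[0,K)}(a)` with `K > n`, which is a concatenation of the words `τ_{[0,n+1)}(b)`, so each
window is cut into such words at some phase `t < p`. Only finitely many phases exist, so one of
them works for arbitrarily large windows around the origin, hence for all of `x`. The cut words
cannot all coincide, since then `x` would be `p`-periodic; as `|A_{n+1}| = 2`, they are exactly
the two words `τ_{[0,n+1)}(a)`.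
-/

section Words

variable {α : Type*}

lemma factorAt_eq_map (x : ℤ → α) (i : ℤ) (n : ℕ) :
    factorAt x i n = (List.range n).map fun j : ℕ => x (i + j) := by
  simp [factorAt, ← List.map_eq_flatMap]

@[simp]
lemma length_factorAt (x : ℤ → α) (i : ℤ) (n : ℕ) : (factorAt x i n).length = n := by
  simp [factorAt_eq_map]

@[simp]
lemma getElem_factorAt (x : ℤ → α) (i : ℤ) (n j : ℕ) (hj : j < (factorAt x i n).length) :
    (factorAt x i n)[j] = x (i + j) := by
  simp [factorAt_eq_map]

lemma factorAt_add (x : ℤ → α) (i : ℤ) (m n : ℕ) :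
    factorAt x i (m + n) = factorAt x i m ++ factorAt x (i + m) n := by
  simp [factorAt_eq_map, List.range_add, add_assoc]

lemma take_drop_factorAt (x : ℤ → α) (i : ℤ) {M d p : ℕ} (h : d + p ≤ M) :
    ((factorAt x i M).drop d).take p = factorAt x (i + d) p := by
  obtain ⟨r, rfl⟩ := Nat.exists_eq_add_of_le h
  rw [add_assoc, factorAt_add, List.drop_left' (length_factorAt x i d), factorAt_add,
    List.take_left' (length_factorAt _ _ p)]

lemma length_flatten_of_length_eq {l : List (List α)} {p : ℕ} (hl : ∀ u ∈ l, u.length = p) :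
    l.flatten.length = p * l.length := by
  induction l with
  | nil => simp
  | cons u l ih =>
    simp only [List.flatten_cons, List.length_append, List.length_cons, hl u (by simp),
      ih fun v hv => hl v (by simp [hv])]
    ring

lemma take_drop_flatten_of_length_eq {l : List (List α)} {p : ℕ} (hl : ∀ u ∈ l, u.length = p)
    {q : ℕ} (hq : q < l.length) : (l.flatten.drop (p * q)).take p = l[q] := by
  induction l generalizing q with
  | nil => simp at hq
  | cons u l ih =>
    cases q with
    | zero => simp [List.take_left' (hl u (by simp))]
    | succ q =>
      have hpq : p * (q + 1) = u.length + p * q := by rw [hl u (by simp)]; ring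
      rw [List.flatten_cons, hpq, List.drop_length_add_append]
      exact ih (fun v hv => hl v (by simp [hv])) (by simpa using hq)

lemma exists_lt_add_eq_mul (s : ℕ) {p : ℕ} (hp : 0 < p) : ∃ t < p, ∃ q, s + t = p * q := by
  have hs := Nat.div_add_mod s p
  have hlt := Nat.mod_lt s hp
  by_cases h : s % p = 0
  · exact ⟨0, hp, s / p, by omega⟩
  · exact ⟨p - s % p, by omega, s / p + 1, by rw [mul_add]; omega⟩

lemma exists_phase_of_isInfix_flatten {w : List α} {l : List (List α)} {p : ℕ} (hp : 0 < p)
    (hl : ∀ u ∈ l, u.length = p) (hw : w <:+: l.flatten) :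
    ∃ t < p, ∀ j, t + p * (j + 1) ≤ w.length → (w.drop (t + p * j)).take p ∈ l := by
  obtain ⟨s, r, hsr⟩ := hw
  obtain ⟨t, htp, q, hq⟩ := exists_lt_add_eq_mul s.length hp
  refine ⟨t, htp, fun j hj => ?_⟩
  rw [mul_add_one] at hj
  have hlen := congrArg List.length hsr
  simp only [List.length_append, length_flatten_of_length_eq hl] at hlen
  have hqj : q + j < l.length := by
    by_contra! h
    have := Nat.mul_le_mul_left p h
    rw [mul_add] at this
    omega
  have hblock := take_drop_flatten_of_length_eq hl hqj
  rw [← hsr, mul_add, ← hq, add_assoc, List.append_assoc, List.drop_length_add_append,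
    List.drop_append_of_le_length (by omega),
    List.take_append_of_le_length (by rw [List.length_drop]; omega)]
    at hblock
  rw [hblock]
  exact List.getElem_mem hqj

lemma isPeriodicPoint_of_subsingleton_cutWords {x : ℤ → α} {p t : ℕ} (hp : 0 < p)
    (h : (cutWords x p t).Subsingleton) : IsPeriodicPoint x := by
  refine ⟨p, hp, fun i => ?_⟩
  obtain ⟨k, r, hr, rfl⟩ : ∃ k : ℤ, ∃ r : ℕ, r < p ∧ i = t + k * p + r := by
    have hdiv := Int.mul_ediv_add_emod (i - t) p
    have := Int.emod_nonneg (i - t) (by omega : (p : ℤ) ≠ 0)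
    have := Int.emod_lt_of_pos (i - t) (by omega : (0 : ℤ) < p)
    refine ⟨(i - t) / p, ((i - t) % p).toNat, by omega, ?_⟩
    rw [mul_comm] at hdiv
    omega
  have hblock : factorAt x (t + (k + 1) * p) p = factorAt x (t + k * p) p :=
    h ⟨k + 1, rfl⟩ ⟨k, rfl⟩
  have := congrArg (·[r]?) hblock
  simp only [length_factorAt, hr, getElem?_pos, getElem_factorAt, Option.some.injEq] at this
  convert this using 2
  ring

end Words

lemma exists_forall_of_antitone {ι : Type*} [Finite ι] {Q : ℕ → ι → Prop}
    (hQ : ∀ i, Antitone (Q · i)) (h : ∀ m, ∃ i, Q m i) : ∃ i, ∀ m, Q m i := by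
  by_contra! hne
  choose f hf using hne
  obtain ⟨M, hM⟩ := Finite.exists_le f
  obtain ⟨i, hi⟩ := h M
  exact hf i (hQ i (hM i) hi)

lemma range_eq_pair_of_card_eq_two {ι β : Type*} {f : ι → β} (h : Nat.card ι = 2) {u v : β}
    (hu : u ∈ Set.range f) (hv : v ∈ Set.range f) (huv : u ≠ v) : Set.range f = {u, v} := by
  obtain ⟨a, rfl⟩ := hu
  obtain ⟨b, rfl⟩ := hv
  have hba : b ≠ a := fun hba => huv (hba ▸ rfl)
  obtain ⟨c, -, hc⟩ := (Nat.card_eq_two_iff' a).1 h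
  refine (Set.range_subset_iff.2 fun d => ?_).antisymm
    (Set.pair_subset (Set.mem_range_self a) (Set.mem_range_self b))
  by_cases hda : d = a
  · simp [hda]
  · simp [hc d hda, hc b hba]

section DirectiveSequence

variable {𝒜 : ℕ → Type*} (τ : ∀ n, 𝒜 (n+1) → List (𝒜 n))

lemma sadicWordAux_zero_eq_word0 (k : ℕ) (a : 𝒜 (0 + k)) :
    sadicWordAux τ 0 k a = word0 τ (0 + k) a := by
  induction k with
  | zero => rfl
  | succ k ih =>
    change (τ (0 + k) a).flatMap (sadicWordAux τ 0 k) = (τ (0 + k) a).flatMap (word0 τ (0 + k))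
    rw [funext ih]

lemma exists_word0_eq_flatMap {m k : ℕ} (h : m ≤ k) (a : 𝒜 k) :
    ∃ l : List (𝒜 m), word0 τ k a = l.flatMap (word0 τ m) := by
  induction k, h using Nat.le_induction with
  | base => exact ⟨[a], by simp⟩
  | succ k _ ih =>
    choose L hL using ih
    refine ⟨(τ k a).flatMap L, ?_⟩
    change (τ k a).flatMap (word0 τ k) = _
    rw [List.flatMap_assoc]
    exact List.flatMap_congr fun b _ => hL b

variable {τ}

lemma length_word0_pos (hNE : NonErasing τ) (k : ℕ) (a : 𝒜 k) : 0 < (word0 τ k a).length := by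
  induction k with
  | zero => simp [word0]
  | succ k ih =>
    obtain ⟨c, l, hc⟩ := List.exists_cons_of_ne_nil (hNE k a)
    change 0 < ((τ k a).flatMap (word0 τ k)).length
    simpa [hc] using Or.inl (ih c)

lemma length_word0_eq (hNE : NonErasing τ) (hCL : ConstantLength τ) (k : ℕ) (a b : 𝒜 k) :
    (word0 τ k a).length = (word0 τ k b).length := by
  induction k with
  | zero => simp [word0]
  | succ k ih =>
    obtain ⟨c, -, -⟩ := List.exists_cons_of_ne_nil (hNE k a)
    have hlen (d : 𝒜 (k + 1)) :
        ((τ k d).flatMap (word0 τ k)).length = (word0 τ k c).length * (τ k d).length := by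
      rw [List.flatMap_def, length_flatten_of_length_eq, List.length_map]
      simpa using fun e _ => ih e c
    change ((τ k a).flatMap (word0 τ k)).length = ((τ k b).flatMap (word0 τ k)).length
    rw [hlen, hlen, hCL k a b]

lemma length_word0_le_of_le (hNE : NonErasing τ) (hCL : ConstantLength τ) {k k' : ℕ}
    (h : k ≤ k') (a : 𝒜 k) (b : 𝒜 k') : (word0 τ k a).length ≤ (word0 τ k' b).length := by
  obtain ⟨l, hl⟩ := exists_word0_eq_flatMap τ h b
  have hlen : (word0 τ k' b).length = (word0 τ k a).length * l.length := by
    rw [hl, List.flatMap_def, length_flatten_of_length_eq, List.length_map]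
    simpa using fun e _ => length_word0_eq hNE hCL k e a
  have hpos := length_word0_pos hNE k' b
  rw [hlen] at hpos ⊢
  exact Nat.le_mul_of_pos_right _ (Nat.pos_of_mul_pos_left hpos)

lemma exists_phase_of_mem_XLevel (hNE : NonErasing τ) (hCL : ConstantLength τ)
    {x : ℤ → 𝒜 0} (hx : x ∈ XLevel τ 0) {n p : ℕ} (a₀ : 𝒜 (n + 1))
    (hp : (word0 τ (n + 1) a₀).length = p) (m : ℕ) :
    ∃ t : Fin p, ∀ k : ℤ, k.natAbs ≤ m →
      factorAt x (t + k * p) p ∈ Set.range (word0 τ (n + 1)) := by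
  have hp0 : 0 < p := hp ▸ length_word0_pos hNE _ a₀
  have hlen (a : 𝒜 (n + 1)) : (word0 τ (n + 1) a).length = p :=
    hp ▸ length_word0_eq hNE hCL _ a a₀
  -- whatever its phase `t < p`, the window `[-(m+1)p, (m+2)p)` contains the blocks at
  -- `t + kp` for `|k| ≤ m`
  have hwin : (2 * m + 3) * p = p * (2 * m + 2) + p := by ring
  obtain ⟨K, -, a, hinf⟩ := hx (-((m + 1) * p : ℕ)) ((2 * m + 3) * p)
  rw [sadicWordAux_zero_eq_word0] at hinf
  have hK : n + 1 ≤ 0 + K := by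
    by_contra! hK
    have := hinf.length_le.trans (length_word0_le_of_le hNE hCL hK.le a a₀)
    rw [length_factorAt, hp] at this
    nlinarith
  obtain ⟨l, hl⟩ := exists_word0_eq_flatMap τ hK a
  rw [hl, List.flatMap_def] at hinf
  obtain ⟨t, htp, hblocks⟩ :=
    exists_phase_of_isInfix_flatten hp0 (by simpa using fun a _ => hlen a) hinf
  refine ⟨⟨t, htp⟩, fun k hk => ?_⟩
  obtain ⟨j, hj⟩ : ∃ j : ℕ, (j : ℤ) = k + (m + 1) := ⟨(k + (m + 1)).toNat, by omega⟩
  have hjp := Nat.mul_le_mul_left p (show j + 1 ≤ 2 * m + 2 by omega)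
  have hblock := hblocks j (by rw [length_factorAt]; omega)
  rw [take_drop_factorAt x _ (by rw [mul_add_one] at hjp; omega)] at hblock
  obtain ⟨a, -, ha⟩ := List.mem_map.1 hblock
  refine ⟨a, ha.trans (congrArg (factorAt x · p) ?_)⟩
  push_cast
  linear_combination (p : ℤ) * hj

lemma exists_cutWords_subset_range (hNE : NonErasing τ) (hCL : ConstantLength τ)
    {x : ℤ → 𝒜 0} (hx : x ∈ XLevel τ 0) {n p : ℕ} (a₀ : 𝒜 (n + 1))
    (hp : (word0 τ (n + 1) a₀).length = p) :
    ∃ t : Fin p, cutWords x p t ⊆ Set.range (word0 τ (n + 1)) := by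
  obtain ⟨t, ht⟩ := exists_forall_of_antitone (fun _ _ _ hmm' h k hk => h k (hk.trans hmm'))
    (exists_phase_of_mem_XLevel hNE hCL hx a₀ hp)
  exact ⟨t, by rintro _ ⟨k, rfl⟩; exact ht k.natAbs k le_rfl⟩

end DirectiveSequence

/-- For a constant-length directive sequence on 2-letter alphabets whose
S-adic subshift is aperiodic, with `p_n = |τ_{[0,n+1)}(a)|`, every `x ∈ X_τ` admits for
each `n` a strong rank-2 cut `(p_n, t)` whose cut words are exactly the words
`τ_{[0,n+1)}(a)`, `a ∈ A (n+1)`. -/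
theorem statement3 (A : ℕ → Type) [∀ n, Fintype (A n)]
    (τ : ∀ n, A (n+1) → List (A n))
    (hNE : NonErasing τ) (hCL : ConstantLength τ)
    (hcard : ∀ n, Fintype.card (A (n+1)) = 2)
    (hap : ∀ x ∈ XLevel τ 0, IsAperiodicPoint x) :
    ∀ x ∈ XLevel τ 0, ∀ (n : ℕ) (a₀ : A (n+1)),
      ∃ t : ℕ, StrongRank2Cut x (word0 τ (n+1) a₀).length t ∧
        cutWords x (word0 τ (n+1) a₀).length t
          = {w | ∃ a : A (n+1), w = word0 τ (n+1) a} := by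
  intro x hx n a₀
  obtain ⟨t, hsub⟩ := exists_cutWords_subset_range hNE hCL hx a₀ rfl
  obtain ⟨u, hu, v, hv, huv⟩ := Set.not_subsingleton_iff.1 fun h =>
    hap x hx (isPeriodicPoint_of_subsingleton_cutWords (length_word0_pos hNE _ a₀) h)
  have hrange := range_eq_pair_of_card_eq_two (by rw [Nat.card_eq_fintype_card, hcard n])
    (hsub hu) (hsub hv) huv
  have hcut : cutWords x _ t = {u, v} :=
    (hsub.trans hrange.le).antisymm (Set.pair_subset hu hv)
  refine ⟨t, ⟨t.isLt, u, v, huv, hcut⟩, ?_⟩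
  rw [hcut, ← hrange]
  ext w
  simp [eq_comm]

end ToeplitzFR
end

section
/- Let A be a finite alphabet and let x ∈ A^ℤ be aperiodic. Suppose (p,t) and (q,s) are strong rank-2 cuts of x and p divides q. Then (p,t) and (q,s) coincide: for the unique integer k with t+kp ≤ s < t+(k+1)p, either [t+kp, s) ⊆ Per_q(x) or [s, t+(k+1)p) ⊆ Per_q(x). -/
namespace ToeplitzFR

open Set

variable {A B C : Type*}

/-!
Since `p ∣ q`, the positions `t + kp + mq` (`m ∈ ℤ`) all start `p`-blocks of the cut
`(p, t)`, and the positions `s + mq` start `q`-blocks of the cut `(q, s)`. If some `i ∈ [t + kp, s)`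
and some `j ∈ [s, t + (k+1)p)` are not `q`-periodic, then, each cut having only two words,
`x (i + mq) = x i` holds exactly when the `p`-block at `t + kp + mq` equals the one at `t + kp`,
and likewise for `j`. Reading the same two conditions off the `q`-blocks `C m = x[s + mq, s + (m+1)q)`,
which contain `j + mq` and `i + (m+1)q`, gives `C (m+1) = C 0 ↔ C m = C (-1)`. For a two-valued
sequence this forces `C (m+2) = C m`, so `x` has period `2q`, contradicting aperiodicity.
-/

section TwoValued

variable {β γ : Type*} {u v : β}

lemma eq_of_mem_pair_of_ne {a b c : β} (ha : a ∈ ({u, v} : Set β)) (hb : b ∈ ({u, v} : Set β))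
    (hc : c ∈ ({u, v} : Set β)) (hac : a ≠ c) (hbc : b ≠ c) : a = b := by
  simp only [mem_insert_iff, mem_singleton_iff] at ha hb hc
  rcases ha with rfl | rfl <;> rcases hb with rfl | rfl <;> rcases hc with rfl | rfl <;> tauto

lemma eq_apply_zero_iff_of_mem_pair {f : ℤ → β} {g : ℤ → γ} (hf : ∀ m, f m ∈ ({u, v} : Set β))
    (hfg : ∀ m m', f m = f m' → g m = g m') (hg : ∃ m, g m ≠ g 0) (m : ℤ) :
    g m = g 0 ↔ f m = f 0 := by
  refine ⟨fun hm => ?_, hfg m 0⟩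
  obtain ⟨m₀, hm₀⟩ := hg
  by_contra hne
  have hf₀ : f m₀ ≠ f 0 := fun h => hm₀ (hfg _ _ h)
  exact hm₀ (hm ▸ hfg _ _ (eq_of_mem_pair_of_ne (hf m) (hf m₀) (hf 0) hne hf₀)).symm

lemma periodic_two_of_mem_pair {f : ℤ → β} (hf : ∀ m, f m ∈ ({u, v} : Set β))
    (h : ∀ m, f (m + 1) = f 0 ↔ f m = f (-1)) : Function.Periodic f 2 := by
  have hstep : ∀ m, f (m + 1) = f 0 ↔ (f m = f 0 ↔ f (-1) = f 0) := by
    intro m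
    by_cases h₀ : f (-1) = f 0
    · simp [h m, h₀]
    · simp only [h m, h₀, iff_false]
      exact ⟨fun hm hm₀ => h₀ (hm ▸ hm₀), fun hm => eq_of_mem_pair_of_ne (hf m) (hf _) (hf 0) hm h₀⟩
  intro m
  have hm : f (m + 2) = f 0 ↔ f m = f 0 := by
    rw [show m + 2 = m + 1 + 1 by ring, hstep (m + 1), hstep m]
    tauto
  by_cases hm₀ : f m = f 0
  · rw [hm.2 hm₀, hm₀]
  · exact eq_of_mem_pair_of_ne (hf _) (hf m) (hf 0) (mt hm.1 hm₀) hm₀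

end TwoValued

section Words

variable {A : Type*}

/-- The coercion `List ℕ → List ℤ` hidden in `factorAt` is a monadic bind, opaque to `simp` lemmas
about `List.range`. -/
lemma factorAt_eq_map_range (x : ℤ → A) (i : ℤ) (n : ℕ) :
    factorAt x i n = (List.range n).map fun j : ℕ => x (i + j) := by
  simp [factorAt, ← List.map_eq_flatMap]

lemma apply_add_eq_of_factorAt_eq (x : ℤ → A) {i i' r : ℤ} {n : ℕ}
    (h : factorAt x i n = factorAt x i' n) (hr : r ∈ Ico 0 (n : ℤ)) :
    x (i + r) = x (i' + r) := by
  have hlt : r.toNat < n := by grind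
  have key : ∀ z, (factorAt x z n)[r.toNat]? = some (x (z + r)) := fun z => by
    simp [factorAt_eq_map_range, hlt, Int.toNat_of_nonneg hr.1]
  simpa [key] using congrArg (·[r.toNat]?) h

lemma periodic_of_periodic_factorAt {x : ℤ → A} {n : ℕ} (hn : 0 < n) {b r : ℤ}
    (h : Function.Periodic (fun m : ℤ => factorAt x (b + m * n) n) r) :
    Function.Periodic x (r * n) := by
  intro z
  obtain ⟨a, ρ, hρ, hz⟩ : ∃ a ρ : ℤ, ρ ∈ Ico 0 (n : ℤ) ∧ b + a * n + ρ = z :=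
    ⟨(z - b) / n, (z - b) % n, ⟨Int.emod_nonneg _ (by omega), Int.emod_lt_of_pos _ (by omega)⟩,
      by linear_combination Int.ediv_mul_add_emod (z - b) n⟩
  have := apply_add_eq_of_factorAt_eq x (h a) hρ
  rwa [hz, show b + (a + r) * n + ρ = z + r * n by linear_combination hz] at this

namespace StrongRank2Cut

variable {x : ℤ → A} {n c : ℕ}

lemma apply_add_mul_eq_iff (hcut : StrongRank2Cut x n c) {q : ℕ} (hdvd : n ∣ q) {b z : ℤ}
    (hb : ∃ l : ℤ, b = c + l * n) (hz : z ∈ Ico b (b + n)) (hzq : z ∉ PerSet x q) (m : ℤ) :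
    x (z + m * q) = x z ↔ factorAt x (b + m * q) n = factorAt x b n := by
  obtain ⟨-, u, v, -, hwords⟩ := hcut
  obtain ⟨l, rfl⟩ := hb
  obtain ⟨d, rfl⟩ := hdvd
  have hf : ∀ m : ℤ, factorAt x (c + l * n + m * ↑(n * d)) n ∈ ({u, v} : Set (List A)) :=
    fun m => hwords ▸ ⟨l + m * d, by congr 1; push_cast; ring⟩
  have hfg : ∀ m m' : ℤ, factorAt x (c + l * n + m * ↑(n * d)) n =
      factorAt x (c + l * n + m' * ↑(n * d)) n →
      x (z + m * ↑(n * d)) = x (z + m' * ↑(n * d)) := fun m m' h => by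
    convert apply_add_eq_of_factorAt_eq x h (r := z - (c + l * n)) (by grind) using 2 <;> ring
  have hg : ∃ m : ℤ, x (z + m * ↑(n * d)) ≠ x (z + 0 * ↑(n * d)) := by
    simpa [PerSet] using hzq
  simpa using eq_apply_zero_iff_of_mem_pair hf hfg hg m

end StrongRank2Cut

end Words

theorem statement5_general {A : Type*} (x : ℤ → A) (hx : IsAperiodicPoint x)
    (p q t s : ℕ) (hcut1 : StrongRank2Cut x p t) (hcut2 : StrongRank2Cut x q s)
    (hdvd : p ∣ q) :
    ∀ k : ℤ, (t : ℤ) + k * p ≤ s → (s : ℤ) < (t : ℤ) + (k + 1) * p →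
      (Set.Ico ((t : ℤ) + k * p) (s : ℤ) ⊆ PerSet x q ∨
       Set.Ico (s : ℤ) ((t : ℤ) + (k + 1) * p) ⊆ PerSet x q) := by
  intro k hks hsk
  have hq : 0 < q := by have := hcut2.1; omega
  have hpq : (p : ℤ) ≤ q := by exact_mod_cast Nat.le_of_dvd hq hdvd
  by_contra! hcon
  simp only [not_subset] at hcon
  obtain ⟨⟨i, hi, hiq⟩, ⟨j, hj, hjq⟩⟩ := hcon
  have hiB := hcut1.apply_add_mul_eq_iff hdvd ⟨k, rfl⟩ (z := i) (by grind) hiq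
  have hjB := hcut1.apply_add_mul_eq_iff hdvd ⟨k, rfl⟩ (z := j) (by grind) hjq
  have hiC := hcut2.apply_add_mul_eq_iff dvd_rfl ⟨-1, by ring⟩ (b := s - q) (by grind) hiq
  have hjC := hcut2.apply_add_mul_eq_iff dvd_rfl ⟨0, by ring⟩ (b := s) (by grind) hjq
  set C : ℤ → List A := fun m => factorAt x (s + m * q) q
  have hC : ∀ m, C (m + 1) = C 0 ↔ C m = C (-1) := fun m => by
    have := (hjC (m + 1)).symm.trans <| (hjB _).trans <| (hiB _).symm.trans (hiC _)
    rw [show (s : ℤ) - q + (m + 1) * q = s + m * q by ring] at this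
    simpa [C, sub_eq_add_neg] using this
  obtain ⟨-, u, v, -, hwords⟩ := hcut2
  have hper := periodic_of_periodic_factorAt hq
    (periodic_two_of_mem_pair (fun m => hwords ▸ ⟨m, rfl⟩ : ∀ m, C m ∈ ({u, v} : Set _)) hC)
  exact hx ⟨2 * q, by omega, fun i => by simpa using hper i⟩

/-- Let `x` be aperiodic and `(p, t)`, `(q, s)` strong rank-2 cuts of `x`
with `p ∣ q`. Then they coincide: for the unique `k` with `t+kp ≤ s < t+(k+1)p`, either
`[t+kp, s) ⊆ Per_q(x)` or `[s, t+(k+1)p) ⊆ Per_q(x)`. -/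
theorem statement5 {A : Type*} [Fintype A] (x : ℤ → A) (hx : IsAperiodicPoint x)
    (p q t s : ℕ) (hcut1 : StrongRank2Cut x p t) (hcut2 : StrongRank2Cut x q s)
    (hdvd : p ∣ q) :
    ∀ k : ℤ, (t : ℤ) + k * p ≤ s → (s : ℤ) < (t : ℤ) + (k + 1) * p →
      (Set.Ico ((t : ℤ) + k * p) (s : ℤ) ⊆ PerSet x q ∨
       Set.Ico (s : ℤ) ((t : ℤ) + (k + 1) * p) ⊆ PerSet x q) :=
  statement5_general x hx p q t s hcut1 hcut2 hdvd

end ToeplitzFR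
end

section
/- Let W be a finite set of nonempty words over a finite alphabet A, and let w₁, w₂, w₃ be words with |w₁|, |w₂|, |w₃| > 2·max{|u| : u ∈ W}. If the words w₁w₂, w₂, and w₂w₃ are each uniquely built from W, then the word w₁w₂w₃ is uniquely built from W. -/
namespace ToeplitzFR

open Set

variable {A B C : Type*}

/-!
A building of `w[i, j)` is encoded by its set of cut positions in `w`. If every word of `W` fits
into the window `[k', k]`, a cut set of `[i, j]` restricts to cut sets of `[i, k]` and `[k', j]`,
and conversely cut sets of `[i, k]` and `[k', j]` that agree on `[k', k]` glue to a cut set of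
`[i, j]`: the overlap always contains a cut, so no block can jump over it. For `w = w₁w₂w₃` the
cut sets of `w₁w₂` and `w₂w₃` agree on `w₂` by uniqueness there, which gives existence; and a cut
set of `w` is the union of its restrictions to `w₁w₂` and `w₂w₃`, which gives uniqueness.
-/

theorem length_extract_of_le {w : List A} {a b : ℕ} (hb : b ≤ w.length) :
    (w.extract a b).length = b - a := by
  simp only [List.extract_eq_take_drop, List.length_take, List.length_drop]
  omega

theorem extract_append_extract (w : List A) {a b c : ℕ} (hab : a ≤ b) (hbc : b ≤ c) :
    w.extract a b ++ w.extract b c = w.extract a c := by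
  simp only [List.extract_eq_take_drop]
  rw [show c - a = (b - a) + (c - b) by omega, List.take_add, List.drop_drop,
    Nat.add_sub_cancel' hab]

theorem extract_eq_of_eq_append {w p x s : List A} {a b : ℕ} (hw : w = p ++ x ++ s)
    (ha : p.length = a) (hb : a + x.length = b) : w.extract a b = x := by
  subst hw ha hb
  simp [List.extract_eq_take_drop]

theorem take_append_extract_append_drop (w : List A) {i j : ℕ} (hij : i ≤ j) :
    w.take i ++ w.extract i j ++ w.drop j = w := by
  rw [List.extract_eq_take_drop, ← List.take_add, Nat.add_sub_cancel' hij,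
    List.take_append_drop]

section ProperAffix

variable {W : Set (List A)} {x y : List A}

def ProperPrefixOfMem (W : Set (List A)) (x : List A) : Prop := ∃ u ∈ W, x <+: u ∧ x ≠ u

def ProperSuffixOfMem (W : Set (List A)) (x : List A) : Prop := ∃ u ∈ W, x <:+ u ∧ x ≠ u

theorem ProperPrefixOfMem.of_prefix (h : ProperPrefixOfMem W y) (hxy : x <+: y) :
    ProperPrefixOfMem W x := by
  obtain ⟨u, hu, hyu, hne⟩ := h
  refine ⟨u, hu, hxy.trans hyu, fun hxu => hne ?_⟩
  subst hxu
  exact hyu.eq_of_length (le_antisymm hyu.length_le hxy.length_le)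

theorem ProperSuffixOfMem.of_suffix (h : ProperSuffixOfMem W y) (hxy : x <:+ y) :
    ProperSuffixOfMem W x := by
  obtain ⟨u, hu, hyu, hne⟩ := h
  refine ⟨u, hu, hxy.trans hyu, fun hxu => hne ?_⟩
  subst hxu
  exact hyu.eq_of_length (le_antisymm hyu.length_le hxy.length_le)

theorem properPrefixOfMem_of_append_mem (h : x ++ y ∈ W) (hy : y ≠ []) :
    ProperPrefixOfMem W x :=
  ⟨x ++ y, h, List.prefix_append x y, by simpa using hy.symm⟩

theorem properSuffixOfMem_of_append_mem (h : x ++ y ∈ W) (hx : x ≠ []) :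
    ProperSuffixOfMem W y :=
  ⟨x ++ y, h, List.suffix_append x y, by simpa using hx.symm⟩

theorem ProperPrefixOfMem.length_lt {L : ℕ} (h : ProperPrefixOfMem W x)
    (hW : ∀ u ∈ W, u.length ≤ L) : x.length < L := by
  obtain ⟨u, hu, hxu, hne⟩ := h
  exact lt_of_lt_of_le (lt_of_le_of_ne hxu.length_le (hne ∘ hxu.eq_of_length)) (hW u hu)

theorem ProperSuffixOfMem.length_lt {L : ℕ} (h : ProperSuffixOfMem W x)
    (hW : ∀ u ∈ W, u.length ≤ L) : x.length < L := by
  obtain ⟨u, hu, hxu, hne⟩ := h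
  exact lt_of_lt_of_le (lt_of_le_of_ne hxu.length_le (hne ∘ hxu.eq_of_length)) (hW u hu)

end ProperAffix

def Consecutive (S : Finset ℕ) (a b : ℕ) : Prop :=
  a ∈ S ∧ b ∈ S ∧ a < b ∧ ∀ c ∈ S, c ≤ a ∨ b ≤ c

/-- `S` is the set of cut positions of a building of `w.extract i j`, read as positions in `w`:
its least and greatest elements delimit `β₀` and `β₁`, and consecutive elements delimit the
blocks `αᵢ`. -/
structure IsCutSet (W : Set (List A)) (w : List A) (i j : ℕ) (S : Finset ℕ) : Prop where
  mem_Icc : ∀ c ∈ S, i ≤ c ∧ c ≤ j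
  extract_mem : ∀ a b, Consecutive S a b → w.extract a b ∈ W
  exists_isLeast : ∃ a, IsLeast (S : Set ℕ) a ∧ ProperSuffixOfMem W (w.extract i a)
  exists_isGreatest : ∃ c, IsGreatest (S : Set ℕ) c ∧ ProperPrefixOfMem W (w.extract c j)

def cutsFrom : ℕ → List (List A) → Finset ℕ
  | n, [] => {n}
  | n, α :: αs => insert n (cutsFrom (n + α.length) αs)

section CutsFrom

variable {W : Set (List A)} {w : List A}

theorem mem_cutsFrom_bounds {n c : ℕ} {αs : List (List A)} (hc : c ∈ cutsFrom n αs) :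
    n ≤ c ∧ c ≤ n + αs.flatten.length := by
  induction αs generalizing n with
  | nil => simp_all [cutsFrom]
  | cons α αs ih =>
    rcases Finset.mem_insert.mp hc with rfl | hc
    · simp
    · have := ih hc
      simp only [List.flatten_cons, List.length_append]
      omega

theorem isLeast_cutsFrom (n : ℕ) (αs : List (List A)) :
    IsLeast (cutsFrom n αs : Set ℕ) n := by
  refine ⟨?_, fun c hc => (mem_cutsFrom_bounds hc).1⟩
  cases αs <;> simp [cutsFrom]

theorem isGreatest_cutsFrom (n : ℕ) (αs : List (List A)) :
    IsGreatest (cutsFrom n αs : Set ℕ) (n + αs.flatten.length) := by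
  refine ⟨?_, fun c hc => (mem_cutsFrom_bounds hc).2⟩
  induction αs generalizing n with
  | nil => simp [cutsFrom]
  | cons α αs ih =>
    have := ih (n + α.length)
    simp only [Finset.coe_insert, cutsFrom, List.flatten_cons, List.length_append,
      ← Nat.add_assoc]
    exact Set.mem_insert_of_mem _ this

theorem extract_mem_of_consecutive_cutsFrom (hWne : ∀ u ∈ W, u ≠ []) {p s : List A}
    {αs : List (List A)} (hαs : ∀ α ∈ αs, α ∈ W) (hw : w = p ++ αs.flatten ++ s) {a b : ℕ}
    (hab : Consecutive (cutsFrom p.length αs) a b) : w.extract a b ∈ W := by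
  induction αs generalizing p with
  | nil =>
    obtain ⟨ha, hb, hlt, -⟩ := hab
    simp_all [cutsFrom]
  | cons α αs ih =>
    obtain ⟨ha, hb, hlt, hbetween⟩ := hab
    have hα : α ∈ W := hαs α (by simp)
    have hpos : 0 < α.length := List.length_pos_iff.mpr (hWne α hα)
    have hnext := isLeast_cutsFrom (p.length + α.length) αs
    rcases Finset.mem_insert.mp ha with rfl | ha'
    · have hb' : b ∈ cutsFrom (p.length + α.length) αs :=
        (Finset.mem_insert.mp hb).resolve_left (by omega)
      have hb_eq : b = p.length + α.length := by
        have := hbetween _ (Finset.mem_insert_of_mem hnext.1)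
        have := hnext.2 hb'
        omega
      rw [extract_eq_of_eq_append (p := p) (x := α) (s := αs.flatten ++ s) (by simp [hw]) rfl
        hb_eq.symm]
      exact hα
    · have hb' : b ∈ cutsFrom (p.length + α.length) αs :=
        (Finset.mem_insert.mp hb).resolve_left (by have := hnext.2 ha'; omega)
      refine ih (p := p ++ α) (fun β hβ => hαs β (by simp [hβ])) (by simp [hw]) ?_
      rw [List.length_append]
      exact ⟨ha', hb', hlt, fun c hc => hbetween c (Finset.mem_insert_of_mem hc)⟩

theorem exists_cutsFrom_eq {S : Finset ℕ} (hS : ∀ a b, Consecutive S a b → w.extract a b ∈ W)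
    {a c : ℕ} (ha : IsLeast (S : Set ℕ) a) (hc : IsGreatest (S : Set ℕ) c)
    (hcw : c ≤ w.length) :
    ∃ αs : List (List A), (∀ α ∈ αs, α ∈ W) ∧ αs.flatten = w.extract a c ∧
      cutsFrom a αs = S := by
  induction S using Finset.induction_on_min generalizing a with
  | empty => exact (Finset.notMem_empty a ha.1).elim
  | insert a' s hlt ih =>
    obtain rfl : a = a' := by
      rcases Finset.mem_insert.mp ha.1 with h | h
      · exact h
      · exact absurd (ha.2 (Finset.mem_insert_self a' s)) (not_le.mpr (hlt a h))
    rcases s.eq_empty_or_nonempty with rfl | hne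
    · obtain rfl : c = a := by simpa using hc.1
      exact ⟨[], by simp, by simp, rfl⟩
    set b := s.min' hne
    have hab : a < b := hlt b (s.min'_mem hne)
    have hcons : Consecutive (insert a s) a b :=
      ⟨Finset.mem_insert_self a s, Finset.mem_insert_of_mem (s.min'_mem hne), hab,
        fun x hx => (Finset.mem_insert.mp hx).imp le_of_eq (s.min'_le x)⟩
    have hc' : IsGreatest (s : Set ℕ) c := by
      refine ⟨?_, fun x hx => hc.2 (Finset.mem_insert_of_mem hx)⟩
      refine (Finset.mem_insert.mp hc.1).resolve_left fun h => ?_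
      have := hc.2 hcons.2.1
      omega
    have hbc : b ≤ c := hc'.2 (s.min'_mem hne)
    obtain ⟨αs, hαs, hflat, hcuts⟩ :=
      ih (fun x y hxy => hS x y ⟨Finset.mem_insert_of_mem hxy.1,
        Finset.mem_insert_of_mem hxy.2.1, hxy.2.2.1, fun z hz => by
          rcases Finset.mem_insert.mp hz with rfl | hz
          · exact Or.inl (hlt x hxy.1).le
          · exact hxy.2.2.2 z hz⟩)
        ⟨s.min'_mem hne, fun x hx => s.min'_le x hx⟩ hc'
    refine ⟨w.extract a b :: αs, ?_, ?_, ?_⟩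
    · exact fun α hα => (List.mem_cons.mp hα).elim (· ▸ hS a b hcons) (hαs α)
    · rw [List.flatten_cons, hflat, extract_append_extract w hab.le hbc]
    · rw [cutsFrom, length_extract_of_le (hbc.trans hcw), Nat.add_sub_cancel' hab.le, hcuts]

theorem map_length_eq_of_cutsFrom_eq {n : ℕ} {αs βs : List (List A)}
    (hα : ∀ α ∈ αs, α ≠ []) (hβ : ∀ β ∈ βs, β ≠ []) (h : cutsFrom n αs = cutsFrom n βs) :
    αs.map List.length = βs.map List.length := by
  induction αs generalizing n βs with
  | nil =>
    cases βs with
    | nil => rfl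
    | cons β βs =>
      have hmem : n + β.length ∈ cutsFrom n (β :: βs) :=
        Finset.mem_insert_of_mem (isLeast_cutsFrom _ βs).1
      have := List.length_pos_iff.mpr (hβ β (by simp))
      rw [← h, cutsFrom, Finset.mem_singleton] at hmem
      omega
  | cons α αs ih =>
    cases βs with
    | nil =>
      have hmem : n + α.length ∈ cutsFrom n (α :: αs) :=
        Finset.mem_insert_of_mem (isLeast_cutsFrom _ αs).1
      have := List.length_pos_iff.mpr (hα α (by simp))
      rw [h, cutsFrom, Finset.mem_singleton] at hmem
      omega
    | cons β βs =>
      have hαpos := List.length_pos_iff.mpr (hα α (by simp))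
      have hβpos := List.length_pos_iff.mpr (hβ β (by simp))
      have htail : cutsFrom (n + α.length) αs = cutsFrom (n + β.length) βs := by
        have hαn : n ∉ cutsFrom (n + α.length) αs := fun hn =>
          absurd ((isLeast_cutsFrom _ αs).2 hn) (by omega)
        have hβn : n ∉ cutsFrom (n + β.length) βs := fun hn =>
          absurd ((isLeast_cutsFrom _ βs).2 hn) (by omega)
        rw [← Finset.erase_insert hαn, ← Finset.erase_insert hβn]
        exact congrArg (·.erase n) h
      have hlen : α.length = β.length := by
        have := (isLeast_cutsFrom _ αs).unique (htail ▸ isLeast_cutsFrom _ βs)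
        omega
      rw [List.map_cons, List.map_cons, hlen,
        ih (fun γ hγ => hα γ (by simp [hγ])) (fun γ hγ => hβ γ (by simp [hγ]))
          (hlen ▸ htail)]

end CutsFrom

section Buildings

variable {W : Set (List A)} {w : List A} {i j : ℕ}

theorem isCutSet_of_isBuilding (hWne : ∀ u ∈ W, u ≠ []) (hij : i ≤ j) (hj : j ≤ w.length)
    {b : List A × List (List A) × List A} (hb : IsBuilding W (w.extract i j) b) :
    IsCutSet W w i j (cutsFrom (i + b.1.length) b.2.1) := by
  obtain ⟨β₀, αs, β₁⟩ := b
  obtain ⟨hv, hαs, hβ₀, hβ₁⟩ := hb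
  dsimp only at hv hαs hβ₀ hβ₁ ⊢
  have hw : w = w.take i ++ (β₀ ++ αs.flatten ++ β₁) ++ w.drop j := by
    rw [← hv, take_append_extract_append_drop w hij]
  have hi : (w.take i).length = i := by rw [List.length_take]; omega
  have hlen : β₀.length + αs.flatten.length + β₁.length = j - i := by
    rw [← List.length_append, ← List.length_append, ← hv, length_extract_of_le hj]
  refine ⟨fun c hc => ?_, fun a b hab => ?_, ⟨_, isLeast_cutsFrom _ _, ?_⟩,
    ⟨_, isGreatest_cutsFrom _ _, ?_⟩⟩
  · have := mem_cutsFrom_bounds hc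
    omega
  · refine extract_mem_of_consecutive_cutsFrom hWne hαs (p := w.take i ++ β₀)
      (s := β₁ ++ w.drop j) (hw.trans (by simp only [List.append_assoc])) ?_
    rwa [List.length_append, hi]
  · rwa [extract_eq_of_eq_append (p := w.take i) (s := αs.flatten ++ β₁ ++ w.drop j)
      (hw.trans (by simp only [List.append_assoc])) hi rfl]
  · rwa [extract_eq_of_eq_append (p := w.take i ++ β₀ ++ αs.flatten) (x := β₁) (s := w.drop j)
      (hw.trans (by simp only [List.append_assoc])) (by simp only [List.length_append, hi])
      (by omega)]

theorem exists_isBuilding_of_isCutSet {S : Finset ℕ} (hS : IsCutSet W w i j S)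
    (hj : j ≤ w.length) :
    ∃ b, IsBuilding W (w.extract i j) b ∧ cutsFrom (i + b.1.length) b.2.1 = S := by
  obtain ⟨a, ha, hβ₀⟩ := hS.exists_isLeast
  obtain ⟨c, hc, hβ₁⟩ := hS.exists_isGreatest
  have hia := (hS.mem_Icc a ha.1).1
  have hac : a ≤ c := ha.2 hc.1
  have hcj := (hS.mem_Icc c hc.1).2
  obtain ⟨αs, hαs, hflat, hcuts⟩ := exists_cutsFrom_eq hS.extract_mem ha hc (hcj.trans hj)
  refine ⟨(w.extract i a, αs, w.extract c j), ⟨?_, hαs, hβ₀, hβ₁⟩, ?_⟩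
  · rw [hflat, extract_append_extract w hia hac, extract_append_extract w (hia.trans hac) hcj]
  · dsimp only
    rwa [length_extract_of_le ((hac.trans hcj).trans hj), Nat.add_sub_cancel' hia]

theorem IsBuilding.eq_of_cutsFrom_eq (hWne : ∀ u ∈ W, u ≠ []) {v : List A}
    {b b' : List A × List (List A) × List A} (hb : IsBuilding W v b) (hb' : IsBuilding W v b')
    (h : cutsFrom (i + b.1.length) b.2.1 = cutsFrom (i + b'.1.length) b'.2.1) : b = b' := by
  obtain ⟨β₀, αs, β₁⟩ := b
  obtain ⟨β₀', αs', β₁'⟩ := b'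
  dsimp only at h
  have h₀ : β₀.length = β₀'.length := by
    have := (isLeast_cutsFrom _ αs).unique (h ▸ isLeast_cutsFrom _ αs')
    omega
  have h₁ : αs.flatten.length = αs'.flatten.length := by
    have := (isGreatest_cutsFrom _ αs).unique (h ▸ isGreatest_cutsFrom _ αs')
    omega
  have hv : β₀ ++ αs.flatten ++ β₁ = β₀' ++ αs'.flatten ++ β₁' := hb.1.symm.trans hb'.1
  obtain ⟨hpre, rfl⟩ := List.append_inj hv (by simp [h₀, h₁])
  obtain ⟨rfl, hflat⟩ := List.append_inj hpre h₀
  have hne : ∀ {γs : List (List A)}, (∀ γ ∈ γs, γ ∈ W) → ∀ γ ∈ γs, γ ≠ [] :=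
    fun hγs γ hγ => hWne γ (hγs γ hγ)
  rw [List.eq_iff_flatten_eq.mpr ⟨hflat, map_length_eq_of_cutsFrom_eq (hne hb.2.1)
    (hne hb'.2.1) h⟩]

theorem uniquelyBuiltFrom_extract_iff (hWne : ∀ u ∈ W, u ≠ []) (hij : i ≤ j)
    (hj : j ≤ w.length) :
    UniquelyBuiltFrom W (w.extract i j) ↔ ∃! S, IsCutSet W w i j S := by
  constructor
  · rintro ⟨b, hb, hu⟩
    refine ⟨_, isCutSet_of_isBuilding hWne hij hj hb, fun S hS => ?_⟩
    obtain ⟨b', hb', rfl⟩ := exists_isBuilding_of_isCutSet hS hj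
    rw [hu b' hb']
  · rintro ⟨S, hS, hu⟩
    obtain ⟨b, hb, rfl⟩ := exists_isBuilding_of_isCutSet hS hj
    exact ⟨b, hb, fun b' hb' => hb'.eq_of_cutsFrom_eq hWne hb
      (hu _ (isCutSet_of_isBuilding hWne hij hj hb'))⟩

end Buildings

theorem Consecutive.of_filter {S : Finset ℕ} {p : ℕ → Prop} [DecidablePred p]
    (hp : ∀ a b c, p a → p b → a ≤ c → c ≤ b → p c) {a b : ℕ}
    (h : Consecutive (S.filter p) a b) : Consecutive S a b := by
  obtain ⟨ha, hb, hab, hbetween⟩ := h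
  rw [Finset.mem_filter] at ha hb
  refine ⟨ha.1, hb.1, hab, fun c hc => ?_⟩
  by_contra! hc'
  have := hbetween c (Finset.mem_filter.mpr ⟨hc, hp a b c ha.2 hb.2 hc'.1.le hc'.2.le⟩)
  omega

namespace IsCutSet

variable {W : Set (List A)} {w : List A} {i j k : ℕ} {S : Finset ℕ}

/-- The last cut at or before `k` starts a block reaching past `k`. -/
theorem properPrefixOfMem_extract (hS : IsCutSet W w i j S) (hj : j ≤ w.length) {m : ℕ}
    (hm : IsGreatest (S.filter (· ≤ k) : Set ℕ) m) {c : ℕ} (hc : c ∈ S) (hkc : k < c) :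
    ProperPrefixOfMem W (w.extract m k) := by
  have hU : (S.filter (k < ·)).Nonempty := ⟨c, Finset.mem_filter.mpr ⟨hc, hkc⟩⟩
  set c₀ := (S.filter (k < ·)).min' hU
  have hm' := Finset.mem_filter.mp hm.1
  have hc₀ := Finset.mem_filter.mp ((S.filter (k < ·)).min'_mem hU)
  have hcons : Consecutive S m c₀ := ⟨hm'.1, hc₀.1, by omega, fun x hx => by
    rcases le_or_gt x k with hxk | hxk
    · exact Or.inl (hm.2 (Finset.mem_filter.mpr ⟨hx, hxk⟩))
    · exact Or.inr ((S.filter (k < ·)).min'_le x (Finset.mem_filter.mpr ⟨hx, hxk⟩))⟩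
  refine properPrefixOfMem_of_append_mem (y := w.extract k c₀) ?_ ?_
  · rw [extract_append_extract w hm'.2 hc₀.2.le]
    exact hS.extract_mem m c₀ hcons
  · rw [← List.length_pos_iff, length_extract_of_le ((hS.mem_Icc c₀ hc₀.1).2.trans hj)]
    omega

/-- The first cut at or after `k` ends a block starting before `k`. -/
theorem properSuffixOfMem_extract (hS : IsCutSet W w i j S) (hj : j ≤ w.length) {m : ℕ}
    (hm : IsLeast (S.filter (k ≤ ·) : Set ℕ) m) {a : ℕ} (ha : a ∈ S) (hak : a < k) :
    ProperSuffixOfMem W (w.extract k m) := by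
  have hU : (S.filter (· < k)).Nonempty := ⟨a, Finset.mem_filter.mpr ⟨ha, hak⟩⟩
  set a₀ := (S.filter (· < k)).max' hU
  have hm' := Finset.mem_filter.mp hm.1
  have ha₀ := Finset.mem_filter.mp ((S.filter (· < k)).max'_mem hU)
  have hcons : Consecutive S a₀ m := ⟨ha₀.1, hm'.1, by omega, fun x hx => by
    rcases lt_or_ge x k with hxk | hxk
    · exact Or.inl ((S.filter (· < k)).le_max' x (Finset.mem_filter.mpr ⟨hx, hxk⟩))
    · exact Or.inr (hm.2 (Finset.mem_filter.mpr ⟨hx, hxk⟩))⟩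
  refine properSuffixOfMem_of_append_mem (x := w.extract a₀ k) ?_ ?_
  · rw [extract_append_extract w ha₀.2.le hm'.2]
    exact hS.extract_mem a₀ m hcons
  · rw [← List.length_pos_iff, length_extract_of_le ((hm'.2.trans (hS.mem_Icc m hm'.1).2).trans hj)]
    omega

theorem filter_le (hS : IsCutSet W w i j S) (hkj : k ≤ j) (hj : j ≤ w.length)
    (hW : ∀ u ∈ W, u.length ≤ k - i) : IsCutSet W w i k (S.filter (· ≤ k)) := by
  obtain ⟨a, ha, hβ₀⟩ := hS.exists_isLeast
  obtain ⟨c, hc, hβ₁⟩ := hS.exists_isGreatest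
  have hak : a ≤ k := by
    have hlen := hβ₀.length_lt hW
    rw [length_extract_of_le ((hS.mem_Icc a ha.1).2.trans hj)] at hlen
    have := (hS.mem_Icc a ha.1).1
    omega
  have haT : a ∈ S.filter (· ≤ k) := Finset.mem_filter.mpr ⟨ha.1, hak⟩
  refine ⟨fun x hx => ?_, fun x y hxy => ?_, ⟨a, ⟨haT, fun x hx => ha.2 ?_⟩, hβ₀⟩, ?_⟩
  · rw [Finset.mem_filter] at hx
    exact ⟨(hS.mem_Icc x hx.1).1, hx.2⟩
  · exact hS.extract_mem x y (hxy.of_filter fun _ _ _ _ hb _ hcb => hcb.trans hb)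
  · exact (Finset.mem_filter.mp hx).1
  by_cases hck : c ≤ k
  · exact ⟨c, ⟨Finset.mem_filter.mpr ⟨hc.1, hck⟩, fun x hx => hc.2 (Finset.mem_filter.mp hx).1⟩,
      hβ₁.of_prefix ⟨_, extract_append_extract w hck hkj⟩⟩
  · have hm := Finset.isGreatest_max' _ ⟨a, haT⟩
    exact ⟨_, hm, hS.properPrefixOfMem_extract hj hm hc.1 (not_le.mp hck)⟩

theorem filter_ge (hS : IsCutSet W w i j S) (hik : i ≤ k) (hj : j ≤ w.length)
    (hW : ∀ u ∈ W, u.length ≤ j - k) : IsCutSet W w k j (S.filter (k ≤ ·)) := by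
  obtain ⟨a, ha, hβ₀⟩ := hS.exists_isLeast
  obtain ⟨c, hc, hβ₁⟩ := hS.exists_isGreatest
  have hkc : k ≤ c := by
    have hlen := hβ₁.length_lt hW
    rw [length_extract_of_le hj] at hlen
    have := (hS.mem_Icc c hc.1).2
    omega
  have hcT : c ∈ S.filter (k ≤ ·) := Finset.mem_filter.mpr ⟨hc.1, hkc⟩
  refine ⟨fun x hx => ?_, fun x y hxy => ?_, ?_, ⟨c, ⟨hcT, fun x hx => hc.2 ?_⟩, hβ₁⟩⟩
  · rw [Finset.mem_filter] at hx
    exact ⟨hx.2, (hS.mem_Icc x hx.1).2⟩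
  · exact hS.extract_mem x y (hxy.of_filter fun _ _ _ ha _ hac _ => ha.trans hac)
  · by_cases hka : k ≤ a
    · exact ⟨a, ⟨Finset.mem_filter.mpr ⟨ha.1, hka⟩,
        fun x hx => ha.2 (Finset.mem_filter.mp hx).1⟩,
        hβ₀.of_suffix ⟨_, extract_append_extract w hik hka⟩⟩
    · have hm := Finset.isLeast_min' _ ⟨c, hcT⟩
      exact ⟨_, hm, hS.properSuffixOfMem_extract hj hm ha.1 (not_le.mp hka)⟩
  · exact (Finset.mem_filter.mp hx).1

end IsCutSet

namespace IsCutSet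

variable {W : Set (List A)} {w : List A} {i j k k' : ℕ} {S₁ S₂ : Finset ℕ}

theorem union (h₁ : IsCutSet W w i k S₁) (h₂ : IsCutSet W w k' j S₂) (hik' : i ≤ k')
    (hkj : k ≤ j) (hj : j ≤ w.length) (hW : ∀ u ∈ W, u.length ≤ k - k')
    (hS : S₁.filter (k' ≤ ·) = S₂.filter (· ≤ k)) : IsCutSet W w i j (S₁ ∪ S₂) := by
  have mem₁ : ∀ x ∈ S₂, x ≤ k → x ∈ S₁ := fun x hx hxk =>
    (Finset.mem_filter.mp (hS ▸ Finset.mem_filter.mpr ⟨hx, hxk⟩)).1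
  have mem₂ : ∀ x ∈ S₁, k' ≤ x → x ∈ S₂ := fun x hx hxk =>
    (Finset.mem_filter.mp (hS.symm ▸ Finset.mem_filter.mpr ⟨hx, hxk⟩)).1
  obtain ⟨a₁, ha₁, hβ₀⟩ := h₁.exists_isLeast
  obtain ⟨a₂, ha₂, hβ₀'⟩ := h₂.exists_isLeast
  obtain ⟨c₂, hc₂, hβ₁⟩ := h₂.exists_isGreatest
  have ha₂k : a₂ ≤ k := by
    have hlen := hβ₀'.length_lt hW
    have := h₂.mem_Icc a₂ ha₂.1
    rw [length_extract_of_le (this.2.trans hj)] at hlen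
    omega
  refine ⟨fun x hx => ?_, fun x y hxy => ?_, ⟨a₁, ⟨Finset.mem_union_left _ ha₁.1, ?_⟩, hβ₀⟩,
    ⟨c₂, ⟨Finset.mem_union_right _ hc₂.1, ?_⟩, hβ₁⟩⟩
  · rcases Finset.mem_union.mp hx with hx | hx
    · have := h₁.mem_Icc x hx; omega
    · have := h₂.mem_Icc x hx; omega
  · obtain ⟨hx, hy, hxy, hbetween⟩ := hxy
    have hsub : ∀ {T : Finset ℕ}, T ⊆ S₁ ∪ S₂ → x ∈ T → y ∈ T → Consecutive T x y :=
      fun hT hxT hyT => ⟨hxT, hyT, hxy, fun z hz => hbetween z (hT hz)⟩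
    rcases le_or_gt y k with hyk | hyk
    · have hy₁ : y ∈ S₁ := (Finset.mem_union.mp hy).elim id fun hy => mem₁ y hy hyk
      have hx₁ : x ∈ S₁ := (Finset.mem_union.mp hx).elim id fun hx => mem₁ x hx (by omega)
      exact h₁.extract_mem x y (hsub Finset.subset_union_left hx₁ hy₁)
    · have hy₂ : y ∈ S₂ := (Finset.mem_union.mp hy).elim
        (fun hy => absurd (h₁.mem_Icc y hy).2 (by omega)) id
      have hx₂ : x ∈ S₂ := by
        refine (Finset.mem_union.mp hx).elim (fun hx₁ => mem₂ x hx₁ ?_) id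
        by_contra! hxk'
        have := hbetween a₂ (Finset.mem_union_right _ ha₂.1)
        have := (h₂.mem_Icc a₂ ha₂.1).1
        omega
      exact h₂.extract_mem x y (hsub Finset.subset_union_right hx₂ hy₂)
  · intro x hx
    rcases Finset.mem_union.mp hx with hx | hx
    · exact ha₁.2 hx
    · rcases le_or_gt x k with hxk | hxk
      · exact ha₁.2 (mem₁ x hx hxk)
      · have := (h₁.mem_Icc a₁ ha₁.1).2
        omega
  · intro x hx
    rcases Finset.mem_union.mp hx with hx | hx
    · rcases le_or_gt k' x with hxk | hxk
      · exact hc₂.2 (mem₂ x hx hxk)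
      · have := (h₂.mem_Icc c₂ hc₂.1).1
        omega
    · exact hc₂.2 hx

end IsCutSet

theorem existsUnique_isCutSet_of_overlap {W : Set (List A)} {w : List A} {i j k k' : ℕ}
    (hik' : i ≤ k') (hk'k : k' ≤ k) (hkj : k ≤ j) (hj : j ≤ w.length)
    (hW : ∀ u ∈ W, u.length ≤ k - k') (h₁ : ∃! S, IsCutSet W w i k S)
    (h₀ : ∃! S, IsCutSet W w k' k S) (h₂ : ∃! S, IsCutSet W w k' j S) :
    ∃! S, IsCutSet W w i j S := by
  obtain ⟨S₁, hS₁, hu₁⟩ := h₁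
  obtain ⟨S₂, hS₂, hu₂⟩ := h₂
  have hWle : ∀ {m : ℕ}, k - k' ≤ m → ∀ u ∈ W, u.length ≤ m :=
    fun hm u hu => (hW u hu).trans hm
  refine ⟨S₁ ∪ S₂, hS₁.union hS₂ hik' hkj hj hW (h₀.unique
    (hS₁.filter_ge hik' (hkj.trans hj) hW) (hS₂.filter_le hkj hj hW)), fun S hS => ?_⟩
  rw [← hu₁ _ (hS.filter_le hkj hj (hWle (by omega))),
    ← hu₂ _ (hS.filter_ge hik' hj (hWle (by omega))), ← Finset.filter_or]
  exact (Finset.filter_true_of_mem fun c _ => by omega).symm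

theorem statement7_general {A : Type*} (W : Set (List A))
    (hWne : ∀ w ∈ W, w ≠ []) (w₁ w₂ w₃ : List A)
    (h2 : ∀ u ∈ W, 2 * u.length < w₂.length)
    (h12 : UniquelyBuiltFrom W (w₁ ++ w₂))
    (h2' : UniquelyBuiltFrom W w₂)
    (h23 : UniquelyBuiltFrom W (w₂ ++ w₃)) :
    UniquelyBuiltFrom W (w₁ ++ w₂ ++ w₃) := by
  set w := w₁ ++ w₂ ++ w₃ with hw
  have hlen : w.length = w₁.length + w₂.length + w₃.length := by
    simp only [hw, List.length_append]
  have e₁₂ : w.extract 0 (w₁.length + w₂.length) = w₁ ++ w₂ :=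
    extract_eq_of_eq_append (p := []) (s := w₃) (by simp [hw]) rfl (by simp)
  have e₂ : w.extract w₁.length (w₁.length + w₂.length) = w₂ :=
    extract_eq_of_eq_append (s := w₃) rfl rfl rfl
  have e₂₃ : w.extract w₁.length w.length = w₂ ++ w₃ :=
    extract_eq_of_eq_append (s := []) (by simp [hw]) rfl
      (by simp only [List.length_append]; omega)
  have e : w.extract 0 w.length = w :=
    extract_eq_of_eq_append (p := []) (s := []) (by simp) rfl (Nat.zero_add _)
  rw [← e₁₂, uniquelyBuiltFrom_extract_iff hWne (by omega) (by omega)] at h12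
  rw [← e₂, uniquelyBuiltFrom_extract_iff hWne (by omega) (by omega)] at h2'
  rw [← e₂₃, uniquelyBuiltFrom_extract_iff hWne (by omega) le_rfl] at h23
  rw [← e, uniquelyBuiltFrom_extract_iff hWne (by omega) le_rfl]
  exact existsUnique_isCutSet_of_overlap (Nat.zero_le _) (by omega) (by omega) le_rfl
    (fun u hu => by have := h2 u hu; omega) h12 h2' h23

/-- If `w₁w₂`, `w₂` and `w₂w₃` are uniquely built from a finite set `W`
of nonempty words, and each `wᵢ` is longer than twice every word of `W`, then `w₁w₂w₃`
is uniquely built from `W`. -/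
theorem statement7 {A : Type*} [Fintype A] (W : Set (List A)) (hWfin : W.Finite)
    (hWne : ∀ w ∈ W, w ≠ []) (w₁ w₂ w₃ : List A)
    (h1 : ∀ u ∈ W, 2 * u.length < w₁.length)
    (h2 : ∀ u ∈ W, 2 * u.length < w₂.length)
    (h3 : ∀ u ∈ W, 2 * u.length < w₃.length)
    (h12 : UniquelyBuiltFrom W (w₁ ++ w₂))
    (h2' : UniquelyBuiltFrom W w₂)
    (h23 : UniquelyBuiltFrom W (w₂ ++ w₃)) :
    UniquelyBuiltFrom W (w₁ ++ w₂ ++ w₃) :=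
  statement7_general W hWne w₁ w₂ w₃ h2 h12 h2' h23

end ToeplitzFR
end

section
/- Let X, Y ⊆ A^ℤ be Toeplitz subshifts and let φ : X → Y be a conjugacy admitting block width |φ| = 2n+1. Let x ∈ X, let p > 1 be an integer, and suppose i ∈ ℤ is a p-hole of x. Then there exists j ∈ ℤ with |i − j| < |φ| such that j is a p-hole of φ(x). -/
namespace ToeplitzFR

open Set

variable {A B C : Type*}

/-- If `φ : X → Y` is a conjugacy of Toeplitz subshifts admitting
block width `2n+1` and `i` is a `p`-hole of `x ∈ X`, then `φ(x)` has a `p`-hole `j`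
with `|i - j| < 2n+1`. -/
theorem statement11 {A : Type*} [Fintype A] [TopologicalSpace A] [DiscreteTopology A]
    (X Y : Set (ℤ → A)) (hX : IsToeplitzSubshift X) (hY : IsToeplitzSubshift Y)
    (n : ℕ) (φ : BlockConjugacy A X Y n) (x : ℤ → A) (hx : x ∈ X)
    (p : ℕ) (hp : 1 < p) (i : ℤ) (hi : i ∉ PerSet x p) :
    ∃ j : ℤ, |i - j| < (2 * n + 1 : ℤ) ∧ j ∉ PerSet (φ.toFun x) p := by
  by_contra h
  push_neg at h
  apply hi
  have hy := φ.maps_to x hx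
  have hleft := φ.left_inv x hx
  have e1 : ∀ m : ℤ, x m = φ.code_inv (factorAt (φ.toFun x) (m - n) (2*n+1)) := by
    intro m
    conv_lhs => rw [← hleft]
    exact φ.code_inv_spec _ hy m
  intro k
  rw [e1 (i + k*p), e1 i]
  have key : factorAt (φ.toFun x) (i + k*p - n) (2*n+1)
      = factorAt (φ.toFun x) (i - n) (2*n+1) := by
    unfold factorAt
    apply List.map_congr_left
    intro j hj
    obtain ⟨a, hj', rfl⟩ : ∃ a : ℕ, a < 2*n+1 ∧ j = (a:ℤ) := by simpa using hj
    have hper : (i - n + (a:ℤ)) ∈ PerSet (φ.toFun x) p := by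
      apply h
      rw [abs_lt]
      constructor <;> omega
    have h3 := hper k
    have h2 : i + k*p - n + (a : ℤ) = i - n + a + k*p := by ring
    rw [h2, h3]
  rw [key]

end ToeplitzFR
end
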